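/- arXiv:0904.0912 — 2 statements merged into one kernel-verified Lean document; each statement's English description precedes it below -/
import Mathlib

section
/- Let P be one of the groups of Theorem 1 with center Z and kernel N ⊂ Z of the map to E_8, over a smooth complex projective curve X of genus g. For any M_X(N)-linearization of the line bundle L_P, the subspace of M_X(N)-invariant sections of H^0(M_X(P), L_P) is one-dimensional. (Lemma 5.2) -/
/-!
Lemma 5.2 of Boysal–Pauly: let `P` be one of the groups of Theorem 1 with center `Z`
and kernel `N ⊂ Z` of the map to `E₈`, over a smooth complex projective curve `X` of
genus `g`.  For any `M_X(N)`-linearization of the line bundle `L_P`, the subspace of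
`M_X(N)`-invariant sections of `H⁰(M_X(P), L_P)` is one-dimensional.
-/

/-- The five groups `P` of Theorem 1 having non-trivial kernel `N`:
`Spin(16)`, `SL(9)`, `SL(5)×SL(5)`, `SL(3)×E₆`, `SL(2)×E₇`. -/
inductive ConformalGroup : Type
  | spin16 | sl9 | sl5sl5 | sl3e6 | sl2e7

/-- The order of the center `Z` of `P`. -/
def centerOrder : ConformalGroup → ℕ
  | .spin16 => 4
  | .sl9 => 9
  | .sl5sl5 => 25
  | .sl3e6 => 9
  | .sl2e7 => 4

/-- The order of the kernel `N ⊂ Z` of `φ : P → E₈`; one has `|N| = |Z|^{1/2}`. -/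
def kernelOrder : ConformalGroup → ℕ
  | .spin16 => 2
  | .sl9 => 3
  | .sl5sl5 => 5
  | .sl3e6 => 3
  | .sl2e7 => 2

/-- Abstract Heisenberg data for Lemma 5.2: the Verlinde space
`V = H⁰(M_X(P), L_P)` of dimension `|Z|^g`, the finite abelian group `M_X(Z)` of
order `|Z|^{2g}` with its maximal isotropic subgroup `M_X(N)` of order `|N|^{2g}`,
and the Mumford group `G(L_P) = {(ζ,ψ) : ζ ∈ M_X(Z), ψ : t_ζ* L_P ≅ L_P}`, a central
extension of `M_X(Z)` by `ℂ*` acting irreducibly on `V` with `ℂ*` acting by scalar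
multiplication. -/
structure MumfordSetup (g : ℕ) (P : ConformalGroup) where
  /-- The space of global sections `V = H⁰(M_X(P), L_P)`. -/
  V : Type
  [addV : AddCommGroup V]
  [modV : Module ℂ V]
  [fdV : FiniteDimensional ℂ V]
  /-- By the Verlinde formula, `dim H⁰(M_X(P), L_P) = |Z|^g`. -/
  dim_V : Module.finrank ℂ V = (centerOrder P) ^ g
  /-- The finite abelian group `M_X(Z)` of principal `Z`-bundles over `X`. -/
  MZ : Type
  [grpMZ : CommGroup MZ]
  [finMZ : Fintype MZ]
  card_MZ : Fintype.card MZ = (centerOrder P) ^ (2 * g)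
  /-- The subgroup `M_X(N) ⊂ M_X(Z)` of principal `N`-bundles, of order
  `|N|^{2g} = |Z|^g`. -/
  MN : Subgroup MZ
  card_MN : Nat.card MN = (kernelOrder P) ^ (2 * g)
  /-- The Mumford group `G(L_P)`. -/
  G : Type
  [grpG : Group G]
  /-- The projection `G(L_P) → M_X(Z)`. -/
  π : G →* MZ
  π_surj : Function.Surjective π
  /-- The central `ℂ*` of `G(L_P)`. -/
  c : ℂˣ →* G
  c_central : ∀ t : ℂˣ, c t ∈ Subgroup.center G
  c_ker : ∀ x : G, π x = 1 ↔ x ∈ Set.range c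
  /-- The action of the Mumford group on global sections, `s ↦ ψ(t_ζ*(s))`. -/
  ρ : Representation ℂ G V
  /-- The center `ℂ*` acts by scalar multiplication. -/
  ρ_scalar : ∀ t : ℂˣ, ρ (c t) = (t : ℂ) • (LinearMap.id : V →ₗ[ℂ] V)
  /-- `H⁰(M_X(P), L_P)` is an irreducible representation of `G(L_P)` (it is the
  unique irreducible level-one representation of the finite Heisenberg group). -/
  irreducible : ∀ W : Submodule ℂ V, (∀ (x : G), ∀ v ∈ W, ρ x v ∈ W) → W = ⊥ ∨ W = ⊤
  /-- `M_X(N)` is isotropic: any two elements of the Mumford group lying over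
  `M_X(N)` commute. -/
  MN_isotropic : ∀ x y : G, π x ∈ MN → π y ∈ MN → x * y = y * x

attribute [instance] MumfordSetup.addV MumfordSetup.modV MumfordSetup.fdV
  MumfordSetup.grpMZ MumfordSetup.finMZ MumfordSetup.grpG

/-!
The lifts to `G(L_P)` of `M_X(N)` commute, so they have a common eigenvector `v ∈ H⁰`
(Lie's theorem for an abelian Lie algebra of endomorphisms). Because `H⁰` is irreducible,
the translates of `v` by lifts of the cosets of `M_X(N)` span it; this bounds `dim H⁰` by the
index of any isotropic subgroup, so `M_X(N)`, of index `|Z|^g = dim H⁰`, is maximal isotropic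
and the translates form a basis. Each translate is an eigenvector of the linearized
`M_X(N)`-action, and maximality makes the characters of distinct translates distinct. As there
are `|M_X(N)|` translates and at most `|M_X(N)|` characters of `M_X(N)`, the trivial character
occurs exactly once, and the invariant sections are the line spanned by that translate.
-/

namespace Representation

variable {k H V : Type*} [Field k] [AddCommGroup V] [Module k V]

theorem exists_monoidHom_apply_eq_smul [Monoid H] (τ : Representation k H V) {v : V}
    (hv : v ≠ 0) (h : ∀ x, ∃ μ : k, τ x v = μ • v) : ∃ χ : H →* k, ∀ x, τ x v = χ x • v := by
  choose μ hμ using h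
  have hcancel : ∀ a b : k, a • v = b • v → a = b :=
    fun _ _ => (smul_left_injective k hv).eq_iff.mp
  refine ⟨⟨⟨μ, hcancel _ _ ?_⟩, fun x y => hcancel _ _ ?_⟩, hμ⟩
  · rw [← hμ, map_one, Module.End.one_apply, one_smul]
  · rw [← hμ, map_mul, Module.End.mul_apply, hμ, map_smul, hμ, smul_smul, mul_comm]

theorem invariants_eq_span_singleton_of_eigenbasis [Group H] (τ : Representation k H V)
    {ι : Type*} (b : Module.Basis ι k V) (χ : ι → H →* k)
    (hb : ∀ i x, τ x (b i) = χ i x • b i) (hχ : Function.Injective χ) {i₀ : ι}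
    (hi₀ : χ i₀ = 1) : τ.invariants = k ∙ b i₀ := by
  have repr_apply : ∀ x w i, b.repr (τ x w) i = χ i x * b.repr w i := by
    intro x w i
    suffices (b.coord i).comp (τ x) = χ i x • b.coord i from LinearMap.congr_fun this w
    refine b.ext fun j => ?_
    by_cases hij : i = j
    · simp [hb, hij]
    · simp [hb, Ne.symm hij]
  refine le_antisymm (fun w hw => ?_) ?_
  · have hcoord : ∀ i, i ≠ i₀ → b.repr w i = 0 := by
      intro i hi
      obtain ⟨x, hx⟩ : ∃ x, χ i x ≠ 1 := by
        by_contra! h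
        exact hi (hχ (hi₀ ▸ MonoidHom.ext h))
      have := repr_apply x w i
      rw [(mem_invariants τ w).mp hw x] at this
      by_contra h0
      exact hx (mul_right_cancel₀ h0 (this.symm.trans (one_mul _).symm))
    rw [Submodule.mem_span_singleton]
    refine ⟨b.repr w i₀, b.ext_elem fun i => ?_⟩
    by_cases hi : i = i₀
    · simp [hi]
    · simp [hcoord i hi, Ne.symm hi]
  · rw [Submodule.span_le, Set.singleton_subset_iff, SetLike.mem_coe, mem_invariants]
    intro x
    rw [hb, hi₀, MonoidHom.one_apply, one_smul]

end Representation

theorem MonoidHom.mem_range_of_injective_of_card_le {H k ι : Type*} [Monoid H] [Finite H]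
    [Field k] [Finite ι] {χ : ι → H →* k} (hχ : Function.Injective χ)
    (hcard : Nat.card H ≤ Nat.card ι) (φ : H →* k) : φ ∈ Set.range χ := by
  by_contra hφ
  have hinj : Function.Injective (fun o : Option ι => o.elim φ χ) := by
    rintro (_ | i) (_ | j) h
    · rfl
    · exact absurd ⟨j, h.symm⟩ hφ
    · exact absurd ⟨i, h⟩ hφ
    · exact congrArg some (hχ h)
  have := Fintype.ofFinite H
  have := Fintype.ofFinite ι
  have hle := ((linearIndependent_monoidHom H k).comp _ hinj).fintype_card_le_finrank
  rw [Module.finrank_fintype_fun_eq_card, Fintype.card_option] at hle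
  rw [Nat.card_eq_fintype_card, Nat.card_eq_fintype_card] at hcard
  omega

section

attribute [local instance] LieRing.ofAssociativeRing LieAlgebra.ofAssociativeAlgebra

theorem Module.End.exists_forall_apply_eq_smul_of_pairwise_commute {K V : Type*} [Field K]
    [IsAlgClosed K] [CharZero K] [AddCommGroup V] [Module K V] [FiniteDimensional K V]
    [Nontrivial V] (T : Set (Module.End K V)) (hT : T.Pairwise Commute) :
    ∃ v : V, v ≠ 0 ∧ ∀ f ∈ T, ∃ μ : K, f v = μ • v := by
  let L := LieSubalgebra.lieSpan K (Module.End K V) T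
  have : IsLieAbelian L := LieSubalgebra.isLieAbelian_lieSpan_iff.mpr fun f hf f' hf' => by
    rcases eq_or_ne f f' with rfl | hne
    · exact lie_self f
    · rw [Ring.lie_def, sub_eq_zero]; exact hT hf hf' hne
  obtain ⟨χ, hχ⟩ := LieModule.exists_nontrivial_weightSpace_of_isSolvable K L V
  obtain ⟨⟨v, hv⟩, hv0⟩ := exists_ne (0 : LieModule.weightSpace V χ)
  refine ⟨v, fun h => hv0 (by simp [h]), fun f hf => ?_⟩
  let f' : L := ⟨f, LieSubalgebra.subset_lieSpan hf⟩
  exact ⟨χ f', (LieModule.mem_weightSpace _ _).mp hv f'⟩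

end

theorem centerOrder_eq_kernelOrder_sq (P : ConformalGroup) :
    centerOrder P = kernelOrder P ^ 2 := by
  cases P <;> rfl

theorem kernelOrder_pos (P : ConformalGroup) : 0 < kernelOrder P := by
  cases P <;> decide

namespace MumfordSetup

variable {g : ℕ} {P : ConformalGroup} (S : MumfordSetup g P)

def IsIsotropic (M : Subgroup S.MZ) : Prop :=
  ∀ a b : S.G, S.π a ∈ M → S.π b ∈ M → Commute a b

noncomputable def lift : S.MZ → S.G := Function.surjInv S.π_surj

@[simp]
theorem π_lift (z : S.MZ) : S.π (S.lift z) = z := Function.surjInv_eq S.π_surj z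

noncomputable def translate {M : Subgroup S.MZ} (v : S.V) (q : S.MZ ⧸ M) : S.V :=
  S.ρ (S.lift q.out) v

theorem card_MN_eq_finrank : Nat.card S.MN = Module.finrank ℂ S.V := by
  rw [S.card_MN, S.dim_V, centerOrder_eq_kernelOrder_sq P, ← pow_mul]

theorem index_MN : S.MN.index = Nat.card S.MN := by
  have h := S.MN.index_mul_card
  rw [S.card_MN, Nat.card_eq_fintype_card, S.card_MZ, centerOrder_eq_kernelOrder_sq P, ← pow_mul,
    show 2 * (2 * g) = 2 * g + 2 * g by ring, pow_add] at h
  rw [S.card_MN]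
  exact Nat.eq_of_mul_eq_mul_right (pow_pos (kernelOrder_pos P) _) h

theorem nontrivial_V : Nontrivial S.V := by
  rw [← Module.finrank_pos_iff (R := ℂ), ← S.card_MN_eq_finrank]
  exact Nat.card_pos

theorem ρ_apply_ne_zero (x : S.G) {u : S.V} (hu : u ≠ 0) : S.ρ x u ≠ 0 :=
  (map_ne_zero_iff _ (S.ρ.apply_bijective x).injective).mpr hu

theorem translate_ne_zero {M : Subgroup S.MZ} {v : S.V} (hv : v ≠ 0) (q : S.MZ ⧸ M) :
    S.translate v q ≠ 0 :=
  S.ρ_apply_ne_zero _ hv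

theorem exists_common_eigenvector {M : Subgroup S.MZ} (hM : S.IsIsotropic M) :
    ∃ v : S.V, v ≠ 0 ∧ ∀ a : S.G, S.π a ∈ M → ∃ μ : ℂ, S.ρ a v = μ • v := by
  have := S.nontrivial_V
  obtain ⟨v, hv0, hv⟩ := Module.End.exists_forall_apply_eq_smul_of_pairwise_commute
    (S.ρ '' {a | S.π a ∈ M}) <| by
      rintro _ ⟨a, ha, rfl⟩ _ ⟨b, hb, rfl⟩ -
      exact (hM a b ha hb).map S.ρ
  exact ⟨v, hv0, fun a ha => hv _ ⟨a, ha, rfl⟩⟩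

theorem span_range_ρ_apply_eq_top {v : S.V} (hv : v ≠ 0) :
    Submodule.span ℂ (Set.range fun x => S.ρ x v) = ⊤ := by
  refine (S.irreducible _ fun x u hu => ?_).resolve_left fun h => hv ?_
  · set W := Submodule.span ℂ (Set.range fun y => S.ρ y v)
    refine (Submodule.span_le (p := W.comap (S.ρ x))).mpr ?_ hu
    rintro _ ⟨y, rfl⟩
    exact Submodule.subset_span ⟨x * y, by simp⟩
  · have : v ∈ Submodule.span ℂ (Set.range fun x => S.ρ x v) :=
      Submodule.subset_span ⟨1, by simp⟩
    simpa [h] using this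

theorem top_le_span_range_translate {M : Subgroup S.MZ} {v : S.V} (hv0 : v ≠ 0)
    (hv : ∀ a : S.G, S.π a ∈ M → ∃ μ : ℂ, S.ρ a v = μ • v) :
    ⊤ ≤ Submodule.span ℂ (Set.range (S.translate v : S.MZ ⧸ M → S.V)) := by
  rw [← S.span_range_ρ_apply_eq_top hv0, Submodule.span_le]
  rintro _ ⟨x, rfl⟩
  set q : S.MZ ⧸ M := QuotientGroup.mk (S.π x)
  obtain ⟨μ, hμ⟩ := hv ((S.lift q.out)⁻¹ * x) <| by
    simpa using QuotientGroup.eq.mp (QuotientGroup.out_eq' q)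
  have : S.ρ x v = μ • S.translate v q := by
    rw [translate, ← map_smul, ← hμ, ← Module.End.mul_apply, ← map_mul, mul_inv_cancel_left]
  change S.ρ x v ∈ _
  rw [this]
  exact Submodule.smul_mem _ _ (Submodule.subset_span ⟨q, rfl⟩)

theorem finrank_le_index {M : Subgroup S.MZ} (hM : S.IsIsotropic M) :
    Module.finrank ℂ S.V ≤ M.index := by
  obtain ⟨v, hv0, hv⟩ := S.exists_common_eigenvector hM
  have := Fintype.ofFinite (S.MZ ⧸ M)
  calc Module.finrank ℂ S.V
      = Set.finrank ℂ (Set.range (S.translate v : S.MZ ⧸ M → S.V)) := by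
        rw [Set.finrank, top_le_iff.mp (S.top_le_span_range_translate hv0 hv), finrank_top]
    _ ≤ Fintype.card (S.MZ ⧸ M) := finrank_range_le_card _
    _ = M.index := by rw [Subgroup.index, Nat.card_eq_fintype_card]

theorem isIsotropic_sup_zpowers {M : Subgroup S.MZ} (hM : S.IsIsotropic M) {x : S.G}
    (hx : ∀ a : S.G, S.π a ∈ M → Commute x a) :
    S.IsIsotropic (M ⊔ Subgroup.zpowers (S.π x)) := by
  have decomp : ∀ a, S.π a ∈ M ⊔ Subgroup.zpowers (S.π x) →
      ∃ b : S.G, ∃ k : ℤ, S.π b ∈ M ∧ a = b * x ^ k := by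
    intro a ha
    obtain ⟨y, hy, _, ⟨k, rfl⟩, hyk⟩ := Subgroup.mem_sup.mp ha
    refine ⟨a * x ^ (-k), k, ?_, by group⟩
    simpa [← hyk] using hy
  intro a b ha hb
  obtain ⟨a', k, ha', rfl⟩ := decomp a ha
  obtain ⟨b', l, hb', rfl⟩ := decomp b hb
  exact ((hM a' b' ha' hb').mul_right ((hx a' ha').zpow_left l).symm).mul_left
    (((hx b' hb').zpow_left k).mul_right (Commute.zpow_zpow_self x k l))

variable {S} in
theorem mem_MN_of_forall_commute {s : S.MN →* S.G} (hs : ∀ n : S.MN, S.π (s n) = n) {x : S.G}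
    (hx : ∀ m : S.MN, Commute x (s m)) : S.π x ∈ S.MN := by
  have hxMN : ∀ a : S.G, S.π a ∈ S.MN → Commute x a := by
    intro a ha
    obtain ⟨t, ht⟩ := (S.c_ker ((s ⟨_, ha⟩)⁻¹ * a)).mp (by simp [hs])
    rw [← mul_inv_cancel_left (s ⟨_, ha⟩) a, ← ht]
    exact (hx _).mul_right (Subgroup.mem_center_iff.mp (S.c_central t) x)
  -- otherwise `M_X(N) ⊔ ⟨π x⟩` would be isotropic of index smaller than `dim V`
  by_contra hx'
  have hlt : S.MN < S.MN ⊔ Subgroup.zpowers (S.π x) :=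
    lt_of_le_of_ne le_sup_left fun h => hx' (h ▸ Subgroup.mem_sup_right (Subgroup.mem_zpowers _))
  have := S.finrank_le_index (S.isIsotropic_sup_zpowers S.MN_isotropic hxMN)
  have := Subgroup.index_strictAnti hlt
  rw [S.index_MN, S.card_MN_eq_finrank] at this
  omega

theorem commute_of_ρ_apply_comm {a b : S.G} {v : S.V} (hv : v ≠ 0)
    (h : S.ρ a (S.ρ b v) = S.ρ b (S.ρ a v)) : Commute a b := by
  obtain ⟨t, ht⟩ := (S.c_ker ((b * a)⁻¹ * (a * b))).mp <| by
    rw [map_mul, map_inv, map_mul, map_mul]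
    exact inv_mul_eq_one.mpr (mul_comm _ _)
  have hab : a * b = b * a * S.c t := by rw [ht]; group
  -- the scalar `t` fixes the nonzero vector `ρ (b * a) v`, so the commutator `c t` is trivial
  have hfix : (t : ℂ) • S.ρ (b * a) v = (1 : ℂ) • S.ρ (b * a) v :=
    calc (t : ℂ) • S.ρ (b * a) v = S.ρ (b * a) (S.ρ (S.c t) v) := by
          rw [S.ρ_scalar, LinearMap.smul_apply, LinearMap.id_apply, map_smul]
      _ = S.ρ (a * b) v := by rw [hab, map_mul _ (b * a), Module.End.mul_apply]
      _ = S.ρ (b * a) v := by simp only [map_mul, Module.End.mul_apply, h]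
      _ = (1 : ℂ) • S.ρ (b * a) v := (one_smul _ _).symm
  have ht1 : t = 1 := Units.ext (smul_left_injective ℂ (S.ρ_apply_ne_zero _ hv) hfix)
  rw [Commute, SemiconjBy, hab, ht1, map_one, mul_one]

theorem exists_eigenvalue_ρ_apply {b : S.G} {v : S.V} (hv : ∃ μ : ℂ, S.ρ b v = μ • v)
    (a : S.G) : ∃ ν : ℂ, S.ρ b (S.ρ a v) = ν • S.ρ a v := by
  obtain ⟨μ, hv⟩ := hv
  obtain ⟨t, ht⟩ := (S.c_ker (a⁻¹ * b * a * b⁻¹)).mp (by simp [mul_comm])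
  have hba : b * a = a * S.c t * b := by rw [ht]; group
  refine ⟨t * μ, ?_⟩
  rw [← Module.End.mul_apply, ← map_mul, hba, map_mul, map_mul, S.ρ_scalar]
  simp [hv, smul_smul]

variable {S} in
theorem eq_of_eigenvalues_translate_eq {s : S.MN →* S.G} (hs : ∀ n : S.MN, S.π (s n) = n)
    {v : S.V} (hv : v ≠ 0) {q q' : S.MZ ⧸ S.MN} (μ : S.MN → ℂ)
    (hq : ∀ m, S.ρ (s m) (S.translate v q) = μ m • S.translate v q)
    (hq' : ∀ m, S.ρ (s m) (S.translate v q') = μ m • S.translate v q') : q = q' := by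
  set x := S.lift q.out * (S.lift q'.out)⁻¹
  have hx : S.ρ x (S.translate v q') = S.translate v q := by
    simp [x, translate, ← Module.End.mul_apply, ← map_mul]
  have hcomm : ∀ m, Commute x (s m) := fun m =>
    S.commute_of_ρ_apply_comm (S.translate_ne_zero hv q') (by rw [hq', map_smul, hx, hq])
  have := mem_MN_of_forall_commute hs hcomm
  rw [← QuotientGroup.out_eq' q, ← QuotientGroup.out_eq' q', QuotientGroup.eq_iff_div_mem]
  simpa [x, div_eq_mul_inv] using this

end MumfordSetup

/-- **Lemma 5.2**: for any `M_X(N)`-linearization of `L_P` (i.e. any lift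
`s : M_X(N) → G(L_P)` of the inclusion `M_X(N) ⊂ M_X(Z)`), the subspace of
`M_X(N)`-invariant sections of `H⁰(M_X(P), L_P)` is one-dimensional. -/
theorem lemma_5_2 (g : ℕ) (P : ConformalGroup) (S : MumfordSetup g P)
    (s : S.MN →* S.G) (hs : ∀ n : S.MN, S.π (s n) = (n : S.MZ)) :
    Module.finrank ℂ
      (Representation.invariants ((S.ρ.comp s : S.MN →* Module.End ℂ S.V) :
        Representation ℂ S.MN S.V)) = 1 := by
  obtain ⟨v, hv0, hv⟩ := S.exists_common_eigenvector S.MN_isotropic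
  have heigen (q : S.MZ ⧸ S.MN) : ∃ χ : S.MN →* ℂ,
      ∀ m, S.ρ (s m) (S.translate v q) = χ m • S.translate v q :=
    Representation.exists_monoidHom_apply_eq_smul (S.ρ.comp s) (S.translate_ne_zero hv0 q)
      fun m => S.exists_eigenvalue_ρ_apply (hv (s m) (by rw [hs]; exact m.2)) _
  choose χ hχ using heigen
  have hχ_inj : Function.Injective χ := fun q q' h =>
    MumfordSetup.eq_of_eigenvalues_translate_eq hs hv0 (χ q) (hχ q) (h ▸ hχ q')
  have := Fintype.ofFinite (S.MZ ⧸ S.MN)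
  have hcard : Fintype.card (S.MZ ⧸ S.MN) = Module.finrank ℂ S.V := by
    rw [← Nat.card_eq_fintype_card, ← Subgroup.index, S.index_MN, S.card_MN_eq_finrank]
  let b := basisOfTopLeSpanOfCardEqFinrank _ (S.top_le_span_range_translate hv0 hv) hcard
  obtain ⟨q₀, hq₀⟩ := MonoidHom.mem_range_of_injective_of_card_le hχ_inj
    (by rw [← Subgroup.index, S.index_MN]) 1
  rw [Representation.invariants_eq_span_singleton_of_eigenbasis _ b χ (by simpa [b] using hχ)
    hχ_inj hq₀, finrank_span_singleton (by simpa [b] using S.translate_ne_zero hv0 q₀)]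
end

section
/- For the pair (Spin(16), N = Z/2) with M_X(N) identified with the group Jac(X)[2] of 2-torsion line bundles on X, the M_X(N)-invariant section σ ∈ H^0(M_X(Spin(16)), L_{Spin(16)}) is, up to scalar, σ = Σ_κ s_κ = Σ_{α ∈ Jac(X)[2]} α·s_{κ_0}, where {s_κ} is the basis indexed by the 4^g theta-characteristics κ of X normalized by s_{ακ_0} := α·s_{κ_0} using the canonical lift Jac(X)[2] ↪ G(L_{Spin(16)}) and a fixed theta-characteristic κ_0; the section σ does not depend on the choice of κ_0. (Section 7.1.2) -/
/-!
The canonical lift makes `Jac(X)[2]` act on `H⁰(M_X(Spin(16)), L)` by permuting the basis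
`{s_κ}` exactly as it permutes theta-characteristics: `α · s_κ = s_{ακ}`. Since this action on
theta-characteristics is simply transitive, an invariant section has the same coordinate on
every `s_κ`, so it is a multiple of `Σ_κ s_κ`; and for any `κ₀'` the orbit map `α ↦ ακ₀'` is a
bijection, which rewrites `Σ_κ s_κ` as `Σ_α α · s_{κ₀'}`.
-/

/-- Abstract data for Section 7.1.2: the Verlinde space
`V = H⁰(M_X(Spin(16)), L_{Spin(16)})`, the group `J = Jac(X)[2] ≅ M_X(N)` of
2-torsion line bundles acting on `V` through the canonical lift
`Jac(X)[2] ↪ G(L_{Spin(16)})`, the set `Θ` of theta-characteristics of `X` (a simply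
transitive `J`-set of cardinality `4^g`), the basis `{s_κ}` of `V` indexed by `Θ`
(whose zero-divisors are supported on the divisors `D_κ`), a fixed
theta-characteristic `κ₀`, and the normalization `s_{ακ₀} = α·s_{κ₀}`. -/
structure ThetaBasisSetup (g : ℕ) where
  /-- The Verlinde space `V = H⁰(M_X(Spin(16)), L_{Spin(16)})`. -/
  V : Type
  [addV : AddCommGroup V]
  [modV : Module ℂ V]
  [fdV : FiniteDimensional ℂ V]
  /-- The group `J = Jac(X)[2]` of 2-torsion line bundles on `X`, identified with
  `M_X(N)`. -/
  J : Type
  [grpJ : CommGroup J]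
  [finJ : Fintype J]
  card_J : Fintype.card J = 4 ^ g
  /-- The set `Θ` of theta-characteristics of `X`. -/
  Θ : Type
  [finΘ : Fintype Θ]
  card_Θ : Fintype.card Θ = 4 ^ g
  /-- `Jac(X)[2]` acts on theta-characteristics by `(α, κ) ↦ ακ`. -/
  [actJΘ : MulAction J Θ]
  /-- The action of `Jac(X)[2]` on `Θ` is simply transitive (every
  theta-characteristic `κ` equals `ακ₀` for a unique `α ∈ Jac(X)[2]`). -/
  simply_transitive : ∀ κ κ' : Θ, ∃! α : J, α • κ = κ'
  /-- The basis `{s_κ}` of `H⁰(M_X(Spin(16)), L_{Spin(16)})` indexed by the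
  theta-characteristics of `X`. -/
  s : Module.Basis Θ ℂ V
  /-- The linear action of `J = Jac(X)[2] ≅ M_X(N)` on `V` through the canonical
  lift `Jac(X)[2] ↪ G(L_{Spin(16)})`. -/
  ρ : Representation ℂ J V
  /-- The fixed theta-characteristic `κ₀`. -/
  κ₀ : Θ
  /-- The normalization of the basis: `s_{ακ₀} := α·s_{κ₀}`. -/
  normalization : ∀ α : J, s (α • κ₀) = ρ α (s κ₀)
  /-- A (nonzero) `M_X(N)`-invariant section `σ`. -/
  σ : V
  σ_invariant : σ ∈ ρ.invariants
  σ_ne : σ ≠ 0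

attribute [instance] ThetaBasisSetup.addV ThetaBasisSetup.modV ThetaBasisSetup.fdV
  ThetaBasisSetup.grpJ ThetaBasisSetup.finJ ThetaBasisSetup.finΘ ThetaBasisSetup.actJΘ

theorem Fintype.sum_eq_sum_smul_of_existsUnique {G ι M : Type*} [SMul G ι] [Fintype G]
    [Fintype ι] [AddCommMonoid M] {i₀ : ι} (hreg : ∀ i, ∃! g : G, g • i₀ = i) (f : ι → M) :
    ∑ i, f i = ∑ g : G, f (g • i₀) :=
  (Fintype.sum_bijective (· • i₀) ((Function.bijective_iff_existsUnique _).2 hreg) _ _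
    fun _ => rfl).symm

namespace Representation

variable {k G V ι : Type*} [CommRing k] [Group G] [AddCommGroup V] [Module k V]
  [MulAction G ι]

def Permutes (ρ : Representation k G V) (b : ι → V) : Prop :=
  ∀ (g : G) (i : ι), ρ g (b i) = b (g • i)

variable {ρ : Representation k G V}

theorem permutes_of_apply_orbit {b : ι → V} {i₀ : ι} (htrans : ∀ i, ∃ g : G, g • i₀ = i)
    (horbit : ∀ g : G, b (g • i₀) = ρ g (b i₀)) : ρ.Permutes b := by
  intro g i
  obtain ⟨h, rfl⟩ := htrans i
  rw [horbit, smul_smul, horbit, map_mul, Module.End.mul_apply]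

namespace Permutes

theorem repr_apply_smul {b : Module.Basis ι k V} (hρ : ρ.Permutes b) (g : G) (v : V) (i : ι) :
    b.repr (ρ g v) (g • i) = b.repr v i := by
  have hlin : (Finsupp.lapply (g • i) ∘ₗ b.repr.toLinearMap) ∘ₗ ρ g =
      Finsupp.lapply i ∘ₗ b.repr.toLinearMap := by
    refine b.ext fun j => ?_
    simp only [LinearMap.comp_apply, LinearEquiv.coe_coe, Finsupp.lapply_apply, hρ g j,
      Module.Basis.repr_self, Finsupp.single_apply_left (MulAction.injective g)]
  exact LinearMap.congr_fun hlin v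

theorem repr_smul_of_mem_invariants {b : Module.Basis ι k V} (hρ : ρ.Permutes b) {v : V}
    (hv : v ∈ ρ.invariants) (g : G) (i : ι) : b.repr v (g • i) = b.repr v i := by
  rw [← hρ.repr_apply_smul g v i, hv g]

theorem exists_eq_smul_sum_of_mem_invariants [Fintype ι] {b : Module.Basis ι k V}
    (hρ : ρ.Permutes b) {i₀ : ι} (htrans : ∀ i, ∃ g : G, g • i₀ = i) {v : V}
    (hv : v ∈ ρ.invariants) (hv₀ : v ≠ 0) : ∃ c : k, c ≠ 0 ∧ v = c • ∑ i, b i := by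
  have hconst : ∀ i, b.repr v i = b.repr v i₀ := fun i => by
    obtain ⟨g, rfl⟩ := htrans i
    exact hρ.repr_smul_of_mem_invariants hv g i₀
  have hv_eq : v = b.repr v i₀ • ∑ i, b i := by
    conv_lhs => rw [← b.sum_repr v]
    simp only [hconst, Finset.smul_sum]
  refine ⟨b.repr v i₀, fun hc => hv₀ ?_, hv_eq⟩
  rw [hv_eq, hc, zero_smul]

end Permutes

end Representation

/-- **Section 7.1.2**: the `M_X(N)`-invariant section `σ` is, up to a nonzero scalar,
`σ = Σ_κ s_κ`; moreover `Σ_κ s_κ = Σ_{α ∈ Jac(X)[2]} α·s_{κ₀'}` for *every*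
theta-characteristic `κ₀'`, so `σ` does not depend on the choice of `κ₀`. -/
theorem spin16_invariant_section (g : ℕ) (S : ThetaBasisSetup g) :
    (∃ c : ℂ, c ≠ 0 ∧ S.σ = c • ∑ κ : S.Θ, S.s κ) ∧
      ∀ κ₀' : S.Θ, (∑ κ : S.Θ, S.s κ) = ∑ α : S.J, S.ρ α (S.s κ₀') := by
  have hρ : S.ρ.Permutes S.s := Representation.permutes_of_apply_orbit
    (fun κ => (S.simply_transitive S.κ₀ κ).exists) S.normalization
  refine ⟨hρ.exists_eq_smul_sum_of_mem_invariants
    (fun κ => (S.simply_transitive S.κ₀ κ).exists) S.σ_invariant S.σ_ne, fun κ₀' => ?_⟩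
  rw [Fintype.sum_eq_sum_smul_of_existsUnique (S.simply_transitive κ₀') S.s]
  exact Finset.sum_congr rfl fun α _ => (hρ α κ₀').symm
end
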